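/- arXiv:2506.10405 — 8 statements merged into one kernel-verified Lean document; each statement's English description precedes it below -/
import Mathlib

section
/- Let ρ : Fin k → Fin n be an injective prefix of fixed jobs and let q_1 be the unit relaxation of (p, ρ). Then for every permutation π of Fin n with π ℓ = ρ ℓ for all ℓ < k, one has TEC*(p, π) ≥ TEC*(q_1, id). -/
namespace TOU

open Classical in
/-- The infimum of a set of rationals, as an element of `WithTop ℚ`:
the least element of the set when one exists, and `⊤` otherwise.
(All the sets of achievable total energy costs considered below are finite,
so this is the infimum, and it is `⊤` exactly when the set is empty.) -/
noncomputable def infQ (A : Set ℚ) : WithTop ℚ :=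
  if h : ∃ x ∈ A, ∀ y ∈ A, x ≤ y then ((h.choose : ℚ) : WithTop ℚ) else ⊤

open Classical in
/-- The analogous infimum operation for subsets of `WithTop ℚ`. -/
noncomputable def infW (A : Set (WithTop ℚ)) : WithTop ℚ :=
  if h : ∃ x ∈ A, ∀ y ∈ A, x ≤ y then h.choose else ⊤

variable {S : Type*}

/-- A state profile `Ω : Fin h → S × S` is valid if there are `m ≥ 2` states
`s 0, …, s m` with `s 0 = s 1 = off`, `s (m-1) = s m = off`, such that
`{0, …, h-1}` is the concatenation of consecutive blocks `I_1, …, I_m`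
(delimited by the cumulative endpoints `e 0 = 0 ≤ e 1 ≤ ⋯ ≤ e m = h`) where the
`k`-th block has size `T (s (k-1)) (s k)` (in particular this transition time is
not `∞`) and `Ω i = (s (k-1), s k)` for every `i` in the `k`-th block. -/
def ValidProfile (off : S) (T : S → S → ℕ∞) {h : ℕ} (Ω : Fin h → S × S) : Prop :=
  ∃ (m : ℕ) (s : ℕ → S) (e : ℕ → ℕ),
    2 ≤ m ∧ s 0 = off ∧ s 1 = off ∧ s (m - 1) = off ∧ s m = off ∧
    e 0 = 0 ∧ e m = h ∧
    ∀ k, 1 ≤ k → k ≤ m →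
      e (k - 1) ≤ e k ∧
      T (s (k - 1)) (s k) = ((e k - e (k - 1) : ℕ) : ℕ∞) ∧
      ∀ i : Fin h, e (k - 1) ≤ (i : ℕ) → (i : ℕ) < e k → Ω i = (s (k - 1), s k)

/-- A solution `(σ, Ω)` of the job list `p` is feasible if `Ω` is a valid state
profile, every processing window `[σ j, σ j + p j)` is contained in `{0, …, h-1}`,
the processing windows are pairwise disjoint, and `Ω i = (proc, proc)` for every
interval `i` lying in some processing window. -/
def Feasible (off proc : S) (T : S → S → ℕ∞) {h n : ℕ}
    (p : Fin n → ℕ) (σ : Fin n → ℕ) (Ω : Fin h → S × S) : Prop :=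
  ValidProfile off T Ω ∧
  (∀ j, σ j + p j ≤ h) ∧
  (∀ j j' : Fin n, j ≠ j' → ∀ i : ℕ,
    ¬(σ j ≤ i ∧ i < σ j + p j ∧ σ j' ≤ i ∧ i < σ j' + p j')) ∧
  (∀ j : Fin n, ∀ i : Fin h, σ j ≤ (i : ℕ) → (i : ℕ) < σ j + p j → Ω i = (proc, proc))

/-- The total energy cost of a solution: `TEC(σ, Ω) = Σ_{i<h} c i • P (Ω i)`. -/
def TEC (P : S → S → ℚ) {h : ℕ} (c : Fin h → ℚ) (Ω : Fin h → S × S) : ℚ :=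
  ∑ i, c i * P (Ω i).1 (Ω i).2

/-- A permutation `π` of `Fin n` orders `(σ, Ω)` if
`σ (π ℓ) + p (π ℓ) ≤ σ (π (ℓ+1))` for all `ℓ < n - 1`. -/
def Orders {n : ℕ} (p : Fin n → ℕ) (σ : Fin n → ℕ) (π : Equiv.Perm (Fin n)) : Prop :=
  ∀ (ℓ : ℕ) (h1 : ℓ + 1 < n),
    σ (π ⟨ℓ, by omega⟩) + p (π ⟨ℓ, by omega⟩) ≤ σ (π ⟨ℓ + 1, h1⟩)

/-- `TEC*(p, π)`: the optimal total energy cost over feasible solutions of `p`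
ordered by `π` (`⊤` if none exists). -/
noncomputable def TECopt (off proc : S) (T : S → S → ℕ∞) (P : S → S → ℚ)
    {h n : ℕ} (c : Fin h → ℚ) (p : Fin n → ℕ) (π : Equiv.Perm (Fin n)) : WithTop ℚ :=
  infQ {x : ℚ | ∃ (σ : Fin n → ℕ) (Ω : Fin h → S × S),
    Feasible off proc T p σ Ω ∧ Orders p σ π ∧ x = TEC P c Ω}

/-- The optimal total energy cost over all feasible solutions of `p`
(with no prescribed order of the jobs). -/
noncomputable def TECglobal (off proc : S) (T : S → S → ℕ∞) (P : S → S → ℚ)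
    {h n : ℕ} (c : Fin h → ℚ) (p : Fin n → ℕ) : WithTop ℚ :=
  infQ {x : ℚ | ∃ (σ : Fin n → ℕ) (Ω : Fin h → S × S),
    Feasible off proc T p σ Ω ∧ x = TEC P c Ω}

/-- The jobs not fixed by the prefix `ρ`, i.e. those outside the range of `ρ`. -/
def unfixed {n k : ℕ} (ρ : Fin k → Fin n) : Finset (Fin n) :=
  Finset.univ.filter fun j => ∀ ℓ, ρ ℓ ≠ j

/-- The number of jobs of the `d`-relaxation of `(p, ρ)`:
`k + (Σ_{j ∉ range ρ} p j) / d`. -/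
def relaxLen {n k : ℕ} (p : Fin n → ℕ) (ρ : Fin k → Fin n) (d : ℕ) : ℕ :=
  k + (∑ j ∈ unfixed ρ, p j) / d

/-- The `d`-relaxation of `(p, ρ)`: the fixed jobs `p (ρ 0), …, p (ρ (k-1))`
followed by `(Σ_{j ∉ range ρ} p j) / d` jobs of processing time `d`. -/
def relax {n k : ℕ} (p : Fin n → ℕ) (ρ : Fin k → Fin n) (d : ℕ) :
    Fin (relaxLen p ρ d) → ℕ :=
  fun ℓ => if hl : (ℓ : ℕ) < k then p (ρ ⟨ℓ, hl⟩) else d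

/-- The greatest common divisor of the processing times of the unfixed jobs. -/
def gcdUnfixed {n k : ℕ} (p : Fin n → ℕ) (ρ : Fin k → Fin n) : ℕ :=
  (unfixed ρ).gcd p

/-- The optimal switching cost `κ(s, a, s', b)`: the infimum over all chains
`s = u 0, u 1, …, u r = s'` with `T (u (t-1)) (u t) ≠ ∞` for every `t` and
`Σ_t T (u (t-1)) (u t) = b - a` of the total energy cost of the corresponding
consecutive blocks filling `{a, …, b-1}`. -/
noncomputable def kappa (T : S → S → ℕ∞) (P : S → S → ℚ) {h : ℕ} (c : Fin h → ℚ)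
    (s : S) (a : ℕ) (s' : S) (b : ℕ) : WithTop ℚ :=
  infQ {x : ℚ | ∃ (r : ℕ) (u : ℕ → S) (e : ℕ → ℕ),
    u 0 = s ∧ u r = s' ∧ e 0 = a ∧ e r = b ∧
    (∀ t, 1 ≤ t → t ≤ r → e (t - 1) ≤ e t ∧
      T (u (t - 1)) (u t) = ((e t - e (t - 1) : ℕ) : ℕ∞)) ∧
    x = ∑ t ∈ Finset.Icc 1 r, ∑ i ∈ Finset.Ico (e (t - 1)) (e t),
          (if hi : i < h then c ⟨i, hi⟩ else 0) * P (u (t - 1)) (u t)}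

/-- `d(s, s')`: the minimal total duration `Σ_t T (u (t-1)) (u t)` over chains
`s = u 0, …, u r = s'` with `r ≥ 1` and all transition times finite. -/
noncomputable def minDur (T : S → S → ℕ∞) (s s' : S) : ℕ∞ :=
  sInf {x : ℕ∞ | ∃ (r : ℕ) (u : ℕ → S), 1 ≤ r ∧ u 0 = s ∧ u r = s' ∧
    (∀ t, 1 ≤ t → t ≤ r → T (u (t - 1)) (u t) ≠ ⊤) ∧
    x = ∑ t ∈ Finset.Icc 1 r, T (u (t - 1)) (u t)}

/-- `(a, b)` (as half-open intervals `[a k, b k)`, `k : Fin K`) enumerates the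
maximal blocks of consecutive intervals `i` with `Ω i = (proc, proc)`:
every block is nonempty, consists of processing intervals only, every processing
interval lies in some block, and the (sorted) blocks are strictly separated. -/
def IsMaxProcBlocks (proc : S) {h : ℕ} (Ω : Fin h → S × S) {K : ℕ}
    (a b : Fin K → ℕ) : Prop :=
  (∀ k, a k < b k ∧ b k ≤ h) ∧
  (∀ k, ∀ i : Fin h, a k ≤ (i : ℕ) → (i : ℕ) < b k → Ω i = (proc, proc)) ∧
  (∀ i : Fin h, Ω i = (proc, proc) → ∃ k, a k ≤ (i : ℕ) ∧ (i : ℕ) < b k) ∧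
  (∀ k k' : Fin K, k < k' → b k < a k')


open Classical in
lemma infQ_mono {A B : Set ℚ} (hB : B.Finite) (hAB : A ⊆ B) : infQ B ≤ infQ A := by
  unfold infQ
  by_cases hA : ∃ x ∈ A, ∀ y ∈ A, x ≤ y
  · have hBmin : ∃ x ∈ B, ∀ y ∈ B, x ≤ y := by
      obtain ⟨x, hxA, -⟩ := hA
      exact Set.exists_min_image B id hB ⟨x, hAB hxA⟩
    rw [dif_pos hA, dif_pos hBmin]
    exact_mod_cast hBmin.choose_spec.2 _ (hAB hA.choose_spec.1)
  · rw [dif_neg hA]; exact le_top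

lemma orders_chain {n : ℕ} (p σ : Fin n → ℕ) (π : Equiv.Perm (Fin n))
    (ho : Orders p σ π) :
    ∀ (b : ℕ) (hb : b < n) (a : ℕ) (ha : a < b),
      σ (π ⟨a, by omega⟩) + p (π ⟨a, by omega⟩) ≤ σ (π ⟨b, hb⟩) := by
  intro b
  induction b with
  | zero => intro hb a ha; omega
  | succ b ih =>
    intro hb a ha
    rcases Nat.lt_succ_iff_lt_or_eq.mp ha with hlt | heq
    · exact le_trans (le_trans (ih (by omega) a hlt) (Nat.le_add_right _ _)) (ho b hb)
    · subst heq; exact ho a hb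

set_option maxHeartbeats 1000000 in
/-- the unit-relaxation lower bound for a fixed prefix. -/
theorem unit_relaxation_lower_bound {S : Type*} [Fintype S] (off proc : S)
    (T : S → S → ℕ∞) (hT : ∀ s : S, T s s = 1)
    (P : S → S → ℚ) {h : ℕ} (hh : 2 ≤ h) (c : Fin h → ℚ)
    {n : ℕ} (p : Fin n → ℕ) (hp : ∀ j, 1 ≤ p j)
    {k : ℕ} (ρ : Fin k → Fin n) (hρ : Function.Injective ρ)
    (π : Equiv.Perm (Fin n))
    (hπ : ∀ (ℓ : Fin n) (hℓ : (ℓ : ℕ) < k), π ℓ = ρ ⟨ℓ, hℓ⟩) :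
    TECopt off proc T P c p π ≥ TECopt off proc T P c (relax p ρ 1) (Equiv.refl _) := by
  classical
  have hkn : k ≤ n := by simpa using Fintype.card_le_of_injective ρ hρ
  apply infQ_mono
  · apply Set.Finite.subset (Set.finite_range (fun Ω : Fin h → S × S => TEC P c Ω))
    rintro x ⟨σ', Ω, -, -, rfl⟩
    exact ⟨Ω, rfl⟩
  · rintro x ⟨σ, Ω, hfeas, hord, rfl⟩
    obtain ⟨hvalid, hwin, hdisj, hproc⟩ := hfeas
    set M : ℕ := (∑ j ∈ unfixed ρ, p j) / 1 with hM
    set F : Finset ℕ := (unfixed ρ).biUnion (fun j => Finset.Ico (σ j) (σ j + p j)) with hF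
    have hunfix : ∀ j : Fin n, j ∈ unfixed ρ ↔ ∀ ℓ, ρ ℓ ≠ j := by
      intro j; simp [unfixed]
    have hmemF : ∀ u : ℕ, u ∈ F ↔ ∃ j ∈ unfixed ρ, σ j ≤ u ∧ u < σ j + p j := by
      intro u; simp [hF, Finset.mem_biUnion, Finset.mem_Ico]
    have hcard : F.card = M := by
      rw [hM, Nat.div_one, hF, Finset.card_biUnion]
      · simp [Nat.card_Ico]
      · intro j hj j' hj' hne
        simp only [Function.onFun]
        rw [Finset.disjoint_left]
        intro i hi hi'
        rw [Finset.mem_Ico] at hi hi'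
        exact hdisj j j' hne i ⟨hi.1, hi.2, hi'.1, hi'.2⟩
    set f := F.orderIsoOfFin hcard with hf
    have hFh : ∀ u ∈ F, u < h := by
      intro u hu
      obtain ⟨j, -, -, hu2⟩ := (hmemF u).mp hu
      exact lt_of_lt_of_le hu2 (hwin j)
    have hFproc : ∀ i : Fin h, (i : ℕ) ∈ F → Ω i = (proc, proc) := by
      intro i hi
      obtain ⟨j, -, h1, h2⟩ := (hmemF _).mp hi
      exact hproc j i h1 h2
    have hFge : ∀ u ∈ F, ∀ (ℓ : ℕ) (hℓ : ℓ < k),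
        σ (ρ ⟨ℓ, hℓ⟩) + p (ρ ⟨ℓ, hℓ⟩) ≤ u := by
      intro u hu ℓ hℓ
      obtain ⟨j, hj, hju, -⟩ := (hmemF u).mp hu
      have hjun := (hunfix j).mp hj
      have hm : k ≤ ((π.symm j : Fin n) : ℕ) := by
        by_contra hcon
        push_neg at hcon
        have h1 := hπ (π.symm j) hcon
        rw [Equiv.apply_symm_apply] at h1
        exact hjun _ h1.symm
      have hchain := orders_chain p σ π hord ((π.symm j : Fin n) : ℕ)
        (π.symm j).isLt ℓ (lt_of_lt_of_le hℓ hm)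
      rw [Fin.eta, Equiv.apply_symm_apply] at hchain
      have heq : π ⟨ℓ, by omega⟩ = ρ ⟨ℓ, hℓ⟩ := hπ ⟨ℓ, by omega⟩ hℓ
      rw [heq] at hchain
      exact le_trans hchain hju
    -- the schedule for the relaxed instance
    set σ' : Fin (relaxLen p ρ 1) → ℕ := fun ℓ =>
      if hl : (ℓ : ℕ) < k then σ (ρ ⟨ℓ, hl⟩)
      else (f ⟨(ℓ : ℕ) - k, by
        have h2 : (ℓ : ℕ) < k + M := ℓ.isLt
        omega⟩ : ℕ) with hσ'
    have hσ'lt : ∀ (ℓ : Fin (relaxLen p ρ 1)) (hl : (ℓ : ℕ) < k),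
        σ' ℓ = σ (ρ ⟨ℓ, hl⟩) := by
      intro ℓ hl; rw [hσ']; exact dif_pos hl
    have hσ'memF : ∀ (ℓ : Fin (relaxLen p ρ 1)), ¬ (ℓ : ℕ) < k → σ' ℓ ∈ F := by
      intro ℓ hl
      rw [hσ']; simp only [dif_neg hl]
      exact (f _).2
    have hq : ∀ (ℓ : Fin (relaxLen p ρ 1)) (hl : (ℓ : ℕ) < k),
        relax p ρ 1 ℓ = p (ρ ⟨ℓ, hl⟩) := by
      intro ℓ hl; unfold relax; exact dif_pos hl
    have hq1 : ∀ (ℓ : Fin (relaxLen p ρ 1)), ¬ (ℓ : ℕ) < k → relax p ρ 1 ℓ = 1 := by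
      intro ℓ hl; unfold relax; exact dif_neg hl
    have hσ'mono : ∀ (ℓ ℓ' : Fin (relaxLen p ρ 1)) (h1 : ¬ (ℓ : ℕ) < k)
        (h2 : ¬ (ℓ' : ℕ) < k), (ℓ : ℕ) < (ℓ' : ℕ) → σ' ℓ < σ' ℓ' := by
      intro ℓ ℓ' h1 h2 hlt
      rw [hσ']
      simp only [dif_neg h1, dif_neg h2]
      refine Subtype.coe_lt_coe.mpr (f.strictMono ?_)
      rw [Fin.mk_lt_mk]
      omega
    have hσ'inj : ∀ (ℓ ℓ' : Fin (relaxLen p ρ 1)) (h1 : ¬ (ℓ : ℕ) < k)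
        (h2 : ¬ (ℓ' : ℕ) < k), σ' ℓ = σ' ℓ' → ℓ = ℓ' := by
      intro ℓ ℓ' hh1 hh2 heq
      rw [hσ'] at heq
      simp only [dif_neg hh1, dif_neg hh2] at heq
      have he2 := f.injective (Subtype.ext heq)
      have hvv : (ℓ : ℕ) - k = (ℓ' : ℕ) - k := congrArg Fin.val he2
      exact Fin.ext (by omega)
    clear hσ' hf hF hM
    clear_value σ' f F M
    refine ⟨σ', Ω, ⟨hvalid, ?_, ?_, ?_⟩, ?_, rfl⟩
    · -- windows within h
      intro ℓ
      by_cases hl : (ℓ : ℕ) < k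
      · rw [hσ'lt ℓ hl, hq ℓ hl]; exact hwin _
      · rw [hq1 ℓ hl]
        exact hFh _ (hσ'memF ℓ hl)
    · -- disjoint
      intro ℓ ℓ' hne i hcon
      by_cases hl : (ℓ : ℕ) < k <;> by_cases hl' : (ℓ' : ℕ) < k
      · rw [hσ'lt ℓ hl, hq ℓ hl, hσ'lt ℓ' hl', hq ℓ' hl'] at hcon
        refine hdisj (ρ ⟨ℓ, hl⟩) (ρ ⟨ℓ', hl'⟩) ?_ i hcon
        intro hcc
        exact hne (Fin.ext (by simpa using congrArg Fin.val (hρ hcc)))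
      · rw [hσ'lt ℓ hl, hq ℓ hl, hq1 ℓ' hl'] at hcon
        have hiF : i ∈ F := by
          have : i = σ' ℓ' := Nat.le_antisymm (Nat.lt_succ_iff.mp hcon.2.2.2) hcon.2.2.1
          rw [this]; exact hσ'memF ℓ' hl'
        obtain ⟨j, hj, hju1, hju2⟩ := (hmemF i).mp hiF
        have hjne : ρ ⟨ℓ, hl⟩ ≠ j := (hunfix j).mp hj _
        exact hdisj _ j hjne i ⟨hcon.1, hcon.2.1, hju1, hju2⟩
      · rw [hσ'lt ℓ' hl', hq ℓ' hl', hq1 ℓ hl] at hcon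
        have hiF : i ∈ F := by
          have : i = σ' ℓ := Nat.le_antisymm (Nat.lt_succ_iff.mp hcon.2.1) hcon.1
          rw [this]; exact hσ'memF ℓ hl
        obtain ⟨j, hj, hju1, hju2⟩ := (hmemF i).mp hiF
        have hjne : ρ ⟨ℓ', hl'⟩ ≠ j := (hunfix j).mp hj _
        exact hdisj _ j hjne i ⟨hcon.2.2.1, hcon.2.2.2, hju1, hju2⟩
      · rw [hq1 ℓ hl, hq1 ℓ' hl'] at hcon
        have h1 : i = σ' ℓ := Nat.le_antisymm (Nat.lt_succ_iff.mp hcon.2.1) hcon.1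
        have h2 : i = σ' ℓ' := Nat.le_antisymm (Nat.lt_succ_iff.mp hcon.2.2.2) hcon.2.2.1
        exact hne (hσ'inj ℓ ℓ' hl hl' (h1 ▸ h2))
    · -- proc
      intro ℓ i hi1 hi2
      by_cases hl : (ℓ : ℕ) < k
      · rw [hσ'lt ℓ hl] at hi1 hi2
        rw [hq ℓ hl] at hi2
        exact hproc _ i hi1 hi2
      · rw [hq1 ℓ hl] at hi2
        have : (i : ℕ) = σ' ℓ := Nat.le_antisymm (Nat.lt_succ_iff.mp hi2) hi1
        exact hFproc i (this ▸ hσ'memF ℓ hl)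
    · -- Orders with identity
      intro ℓ h1
      simp only [Equiv.refl_apply]
      have hℓlt : ℓ < relaxLen p ρ 1 := by omega
      by_cases hl : ℓ + 1 < k
      · rw [hσ'lt ⟨ℓ, hℓlt⟩ (show ℓ < k by omega), hq ⟨ℓ, hℓlt⟩ (show ℓ < k by omega),
          hσ'lt ⟨ℓ + 1, h1⟩ (show ℓ + 1 < k from hl)]
        have e1 : π ⟨ℓ, by omega⟩ = ρ ⟨ℓ, by omega⟩ := hπ ⟨ℓ, by omega⟩ (show ℓ < k by omega)
        have e2 : π ⟨ℓ + 1, by omega⟩ = ρ ⟨ℓ + 1, by omega⟩ :=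
          hπ ⟨ℓ + 1, by omega⟩ (show ℓ + 1 < k from hl)
        have hc := hord ℓ (by omega)
        rw [e1, e2] at hc
        exact hc
      · by_cases hl2 : ℓ < k
        · rw [hσ'lt ⟨ℓ, hℓlt⟩ (show ℓ < k from hl2), hq ⟨ℓ, hℓlt⟩ (show ℓ < k from hl2)]
          exact hFge _ (hσ'memF ⟨ℓ + 1, h1⟩ (show ¬ ℓ + 1 < k from hl)) ℓ hl2
        · rw [hq1 ⟨ℓ, hℓlt⟩ (show ¬ ℓ < k from hl2)]
          exact hσ'mono ⟨ℓ, hℓlt⟩ ⟨ℓ + 1, h1⟩ (show ¬ ℓ < k from hl2)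
            (show ¬ ℓ + 1 < k from hl) (show ℓ < ℓ + 1 by omega)

end TOU
end

section
/- Let ρ : Fin k → Fin n be an injective prefix of fixed jobs with range ρ ≠ Fin n, let g = gcd {p j : j ∉ range ρ}, and let q_g be the g-relaxation of (p, ρ). Then for every permutation π of Fin n with π ℓ = ρ ℓ for all ℓ < k, one has TEC*(p, π) ≥ TEC*(q_g, id). -/
namespace TOU

variable {S : Type*}

section GcdRelaxAux

open Classical in
/-- If every value in `A` is bounded below by some value in the finite set `B`,
then `infQ B ≤ infQ A`. -/
lemma infQ_le_infQ {A B : Set ℚ} (hB : B.Finite)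
    (hAB : ∀ x ∈ A, ∃ y ∈ B, y ≤ x) : infQ B ≤ infQ A := by
  unfold infQ
  by_cases hA : ∃ x ∈ A, ∀ y ∈ A, x ≤ y
  · obtain ⟨y, hyB, hyx⟩ := hAB hA.choose hA.choose_spec.1
    have hB' : ∃ x ∈ B, ∀ z ∈ B, x ≤ z := by
      obtain ⟨x, hx, hmin⟩ := Set.exists_min_image B id hB ⟨y, hyB⟩
      exact ⟨x, hx, hmin⟩
    rw [dif_pos hA, dif_pos hB']
    exact_mod_cast (hB'.choose_spec.2 y hyB).trans hyx
  · rw [dif_neg hA]; exact le_top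

variable {n : ℕ} (p : Fin n → ℕ) (π : Equiv.Perm (Fin n)) (g k : ℕ)

/-- Number of size-`g` chunks of the `t`-th job in the order `π` (0 for fixed jobs). -/
def chunkCnt (t : ℕ) : ℕ :=
  if ht : t < n then (if k ≤ t then p (π ⟨t, ht⟩) / g else 0) else 0

/-- Cumulative chunk counts. -/
def cum (r : ℕ) : ℕ := ∑ s ∈ Finset.range r, chunkCnt p π g k s

lemma cum_mono : Monotone (cum p π g k) := fun _ _ hab =>
  Finset.sum_le_sum_of_subset (Finset.range_subset_range.mpr hab)

lemma cum_of_le {r : ℕ} (hr : r ≤ k) : cum p π g k r = 0 := by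
  refine Finset.sum_eq_zero fun s hs => ?_
  have : s < k := lt_of_lt_of_le (Finset.mem_range.mp hs) hr
  unfold chunkCnt
  split
  · rw [if_neg (by omega)]
  · rfl

lemma cum_succ (t : ℕ) : cum p π g k (t + 1) = cum p π g k t + chunkCnt p π g k t :=
  Finset.sum_range_succ _ _

/-- The index of the job containing the `r`-th chunk. -/
def tOf (r : ℕ) : ℕ := Nat.findGreatest (fun t => cum p π g k t ≤ r) n

lemma cum_tOf_le (r : ℕ) : cum p π g k (tOf p π g k r) ≤ r :=
  Nat.findGreatest_spec (P := fun t => cum p π g k t ≤ r) (Nat.zero_le n)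
    (by show cum p π g k 0 ≤ r; rw [cum_of_le p π g k (Nat.zero_le k)]; exact Nat.zero_le r)

lemma k_le_tOf (r : ℕ) (hk : k ≤ n) : k ≤ tOf p π g k r :=
  Nat.le_findGreatest (P := fun t => cum p π g k t ≤ r) hk
    (by show cum p π g k k ≤ r; rw [cum_of_le p π g k (le_refl k)]; exact Nat.zero_le r)

lemma tOf_lt (r : ℕ) (hr : r < cum p π g k n) : tOf p π g k r < n := by
  have h1 : tOf p π g k r ≤ n := Nat.findGreatest_le (P := fun t => cum p π g k t ≤ r) n
  rcases h1.lt_or_eq with h | h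
  · exact h
  · exfalso
    have := cum_tOf_le p π g k r
    rw [h] at this; omega

lemma lt_cum_tOf_succ (r : ℕ) (hr : r < cum p π g k n) :
    r < cum p π g k (tOf p π g k r + 1) := by
  have hlt := tOf_lt p π g k r hr
  have := Nat.findGreatest_is_greatest (P := fun t => cum p π g k t ≤ r)
    (n := n) (k := tOf p π g k r + 1) (Nat.lt_succ_self _) (by omega)
  omega

lemma tOf_mono {r r' : ℕ} (hrr : r ≤ r') : tOf p π g k r ≤ tOf p π g k r' :=
  Nat.findGreatest_mono (P := fun t => cum p π g k t ≤ r)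
    (Q := fun t => cum p π g k t ≤ r') (fun _ ht => ht.trans hrr) (le_refl n)

end GcdRelaxAux

/-- the gcd-relaxation lower bound for a fixed prefix. -/
theorem gcd_relaxation_lower_bound {S : Type*} [Fintype S] (off proc : S)
    (T : S → S → ℕ∞) (hT : ∀ s : S, T s s = 1)
    (P : S → S → ℚ) {h : ℕ} (hh : 2 ≤ h) (c : Fin h → ℚ)
    {n : ℕ} (p : Fin n → ℕ) (hp : ∀ j, 1 ≤ p j)
    {k : ℕ} (ρ : Fin k → Fin n) (hρ : Function.Injective ρ)
    (hfull : Set.range ρ ≠ Set.univ)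
    (π : Equiv.Perm (Fin n))
    (hπ : ∀ (ℓ : Fin n) (hℓ : (ℓ : ℕ) < k), π ℓ = ρ ⟨ℓ, hℓ⟩) :
    TECopt off proc T P c p π ≥
      TECopt off proc T P c (relax p ρ (gcdUnfixed p ρ)) (Equiv.refl _) := by
  classical
  have hkn : k ≤ n := by
    have := Fintype.card_le_of_injective ρ hρ
    simpa using this
  set g := gcdUnfixed p ρ with hgdef
  obtain ⟨j0, hj0⟩ := (Set.ne_univ_iff_exists_notMem _).mp hfull
  have hj0u : j0 ∈ unfixed ρ := by
    simp only [unfixed, Finset.mem_filter, Finset.mem_univ, true_and]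
    intro ℓ hℓ
    exact hj0 ⟨ℓ, hℓ⟩
  have hgpos : 0 < g := by
    rcases Nat.eq_zero_or_pos g with h0 | hpos
    · exfalso
      have h1 := Finset.gcd_eq_zero_iff.mp h0 j0 hj0u
      have := hp j0; omega
    · exact hpos
  have hdvd : ∀ j ∈ unfixed ρ, g ∣ p j := fun j hj => Finset.gcd_dvd hj
  have hmem : ∀ t : Fin n, (π t ∈ unfixed ρ ↔ k ≤ (t : ℕ)) := by
    intro t
    constructor
    · intro htu
      by_contra hlt
      push_neg at hlt
      have heq := hπ t hlt
      simp only [unfixed, Finset.mem_filter, Finset.mem_univ, true_and] at htu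
      exact htu ⟨(t : ℕ), hlt⟩ heq.symm
    · intro hkt
      simp only [unfixed, Finset.mem_filter, Finset.mem_univ, true_and]
      intro ℓ hℓ
      have hl2 : ((⟨(ℓ : ℕ), lt_of_lt_of_le ℓ.isLt hkn⟩ : Fin n) : ℕ) < k := ℓ.isLt
      have h1 := hπ ⟨(ℓ : ℕ), lt_of_lt_of_le ℓ.isLt hkn⟩ hl2
      have h2 : ρ ⟨(ℓ : ℕ), hl2⟩ = ρ ℓ := by congr 1
      rw [h2, hℓ] at h1
      have h3 := π.injective h1
      have h4 := congrArg Fin.val h3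
      simp at h4
      omega
  have hcumn : cum p π g k n = (∑ j ∈ unfixed ρ, p j) / g := by
    have hsum : ∑ j ∈ unfixed ρ, p j = g * ∑ j ∈ unfixed ρ, p j / g := by
      rw [Finset.mul_sum]
      exact Finset.sum_congr rfl fun j hj => (Nat.mul_div_cancel' (hdvd j hj)).symm
    rw [hsum, Nat.mul_div_cancel_left _ hgpos]
    unfold cum
    rw [← Fin.sum_univ_eq_sum_range]
    have h1 : ∀ t : Fin n, chunkCnt p π g k (t : ℕ) =
        (if π t ∈ unfixed ρ then p (π t) / g else 0) := by
      intro t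
      unfold chunkCnt
      rw [dif_pos t.isLt]
      by_cases hkt : k ≤ (t : ℕ)
      · rw [if_pos hkt, if_pos ((hmem t).mpr hkt)]
      · rw [if_neg hkt, if_neg (fun hc => hkt ((hmem t).mp hc))]
    rw [Finset.sum_congr rfl (fun t _ => h1 t),
      Equiv.sum_comp π (fun j => if j ∈ unfixed ρ then p j / g else 0)]
    simp
  have hrelaxLen : relaxLen p ρ g = k + cum p π g k n := by
    rw [hcumn]; rfl
  unfold TECopt
  apply infQ_le_infQ
  · apply Set.Finite.subset (Set.finite_range (fun Ω : Fin h → S × S => TEC P c Ω))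
    rintro x ⟨σ', Ω, _, _, rfl⟩
    exact ⟨Ω, rfl⟩
  · rintro x ⟨σ, Ω, hfeas, hord, rfl⟩
    obtain ⟨hvalid, hbound, hdisj, hproc⟩ := hfeas
    -- chain lemma
    have hchain : ∀ b (hb : b < n) a (hab : a < b),
        σ (π ⟨a, hab.trans hb⟩) + p (π ⟨a, hab.trans hb⟩) ≤ σ (π ⟨b, hb⟩) := by
      intro b
      induction b with
      | zero => intro hb a hab; omega
      | succ b ih =>
        intro hb a hab
        rcases Nat.lt_succ_iff_lt_or_eq.mp hab with hc | hc
        · have hbn : b < n := by omega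
          have h1 := ih hbn a hc
          have h2 := hord b hb
          have h3 := hp (π ⟨b, hbn⟩)
          omega
        · subst hc
          exact hord a hb
    -- the schedule for the relaxation
    set σ' : Fin (relaxLen p ρ g) → ℕ := fun ℓ =>
      if hl : (ℓ : ℕ) < k then σ (ρ ⟨ℓ, hl⟩)
      else if ht : tOf p π g k ((ℓ : ℕ) - k) < n then
        σ (π ⟨tOf p π g k ((ℓ : ℕ) - k), ht⟩) +
          ((ℓ : ℕ) - k - cum p π g k (tOf p π g k ((ℓ : ℕ) - k))) * g
      else 0 with hσ'
    have hσ'fix : ∀ (ℓ : Fin (relaxLen p ρ g)) (hl : (ℓ : ℕ) < k),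
        σ' ℓ = σ (ρ ⟨ℓ, hl⟩) := by
      intro ℓ hl
      rw [hσ']
      simp only
      rw [dif_pos hl]
    have hqfix : ∀ (ℓ : Fin (relaxLen p ρ g)) (hl : (ℓ : ℕ) < k),
        relax p ρ g ℓ = p (ρ ⟨ℓ, hl⟩) := by
      intro ℓ hl
      unfold relax
      rw [dif_pos hl]
    have hqfree : ∀ (ℓ : Fin (relaxLen p ρ g)), ¬ (ℓ : ℕ) < k → relax p ρ g ℓ = g := by
      intro ℓ hl
      unfold relax
      rw [dif_neg hl]
    have hwin : ∀ ℓ : Fin (relaxLen p ρ g), k ≤ (ℓ : ℕ) →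
        ∃ (t : ℕ) (ht : t < n),
          t = tOf p π g k ((ℓ : ℕ) - k) ∧
          σ' ℓ = σ (π ⟨t, ht⟩) + ((ℓ : ℕ) - k - cum p π g k t) * g ∧
          σ (π ⟨t, ht⟩) ≤ σ' ℓ ∧
          σ' ℓ + g ≤ σ (π ⟨t, ht⟩) + p (π ⟨t, ht⟩) ∧
          k ≤ t ∧ π ⟨t, ht⟩ ∈ unfixed ρ ∧
          cum p π g k t ≤ (ℓ : ℕ) - k := by
      intro ℓ hkℓ
      have hrM : (ℓ : ℕ) - k < cum p π g k n := by
        have hl2 := ℓ.isLt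
        omega
      have ht : tOf p π g k ((ℓ : ℕ) - k) < n := tOf_lt _ _ _ _ _ hrM
      have hc1 := cum_tOf_le p π g k ((ℓ : ℕ) - k)
      have hc2 := lt_cum_tOf_succ p π g k ((ℓ : ℕ) - k) hrM
      have hkt : k ≤ tOf p π g k ((ℓ : ℕ) - k) := k_le_tOf _ _ _ _ _ hkn
      have hu : π ⟨tOf p π g k ((ℓ : ℕ) - k), ht⟩ ∈ unfixed ρ := (hmem _).mpr hkt
      have hσ'ℓ : σ' ℓ = σ (π ⟨tOf p π g k ((ℓ : ℕ) - k), ht⟩) +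
          ((ℓ : ℕ) - k - cum p π g k (tOf p π g k ((ℓ : ℕ) - k))) * g := by
        rw [hσ']
        simp only
        rw [dif_neg (by omega), dif_pos ht]
      refine ⟨_, ht, rfl, hσ'ℓ, ?_, ?_, hkt, hu, hc1⟩
      · rw [hσ'ℓ]; exact Nat.le_add_right _ _
      · rw [hσ'ℓ]
        have hch : chunkCnt p π g k (tOf p π g k ((ℓ : ℕ) - k)) =
            p (π ⟨tOf p π g k ((ℓ : ℕ) - k), ht⟩) / g := by
          unfold chunkCnt
          rw [dif_pos ht, if_pos hkt]
        have hcs := cum_succ p π g k (tOf p π g k ((ℓ : ℕ) - k))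
        have hle : (ℓ : ℕ) - k - cum p π g k (tOf p π g k ((ℓ : ℕ) - k)) + 1 ≤
            p (π ⟨tOf p π g k ((ℓ : ℕ) - k), ht⟩) / g := by omega
        have hmul := Nat.mul_le_mul_right g hle
        have hpg : p (π ⟨tOf p π g k ((ℓ : ℕ) - k), ht⟩) / g * g =
            p (π ⟨tOf p π g k ((ℓ : ℕ) - k), ht⟩) :=
          Nat.div_mul_cancel (hdvd _ hu)
        rw [Nat.succ_mul] at hmul
        omega
    -- job assignment
    set J : Fin (relaxLen p ρ g) → Fin n := fun ℓ =>
      if hl : (ℓ : ℕ) < k then ρ ⟨ℓ, hl⟩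
      else if ht : tOf p π g k ((ℓ : ℕ) - k) < n then
        π ⟨tOf p π g k ((ℓ : ℕ) - k), ht⟩
      else j0 with hJ
    have hJfix : ∀ (ℓ : Fin (relaxLen p ρ g)) (hl : (ℓ : ℕ) < k), J ℓ = ρ ⟨ℓ, hl⟩ := by
      intro ℓ hl
      rw [hJ]; simp only; rw [dif_pos hl]
    have hJfree : ∀ (ℓ : Fin (relaxLen p ρ g)) (hl : ¬ (ℓ : ℕ) < k)
        (ht : tOf p π g k ((ℓ : ℕ) - k) < n),
        J ℓ = π ⟨tOf p π g k ((ℓ : ℕ) - k), ht⟩ := by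
      intro ℓ hl ht
      rw [hJ]; simp only; rw [dif_neg hl, dif_pos ht]
    have hJwin : ∀ (ℓ : Fin (relaxLen p ρ g)) (i : ℕ), σ' ℓ ≤ i →
        i < σ' ℓ + relax p ρ g ℓ → σ (J ℓ) ≤ i ∧ i < σ (J ℓ) + p (J ℓ) := by
      intro ℓ i hi1 hi2
      by_cases hl : (ℓ : ℕ) < k
      · rw [hσ'fix ℓ hl] at hi1 hi2
        rw [hqfix ℓ hl] at hi2
        rw [hJfix ℓ hl]
        exact ⟨hi1, hi2⟩
      · obtain ⟨t, ht, hteq, _, hlb, hub, _, _, _⟩ := hwin ℓ (by omega)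
        rw [hqfree ℓ hl] at hi2
        subst hteq
        rw [hJfree ℓ hl ht]
        exact ⟨hlb.trans hi1, by omega⟩
    refine ⟨TEC P c Ω, ⟨σ', Ω, ⟨hvalid, ?_, ?_, ?_⟩, ?_, rfl⟩, le_refl _⟩
    -- windows within the horizon
    · intro ℓ
      by_cases hl : (ℓ : ℕ) < k
      · rw [hσ'fix ℓ hl, hqfix ℓ hl]
        exact hbound (ρ ⟨ℓ, hl⟩)
      · obtain ⟨t, ht, _, _, _, hub, _, _, _⟩ := hwin ℓ (by omega)
        rw [hqfree ℓ hl]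
        have := hbound (π ⟨t, ht⟩)
        omega
    -- disjointness
    · intro ℓ ℓ' hne i hi
      obtain ⟨h1, h2, h3, h4⟩ := hi
      by_cases hJe : J ℓ = J ℓ'
      · by_cases hl : (ℓ : ℕ) < k
        · by_cases hl' : (ℓ' : ℕ) < k
          · rw [hJfix ℓ hl, hJfix ℓ' hl'] at hJe
            have h5 := congrArg Fin.val (hρ hJe)
            simp at h5
            exact hne (Fin.ext h5)
          · obtain ⟨t, ht, hteq, _, _, _, _, hu, _⟩ := hwin ℓ' (by omega)
            subst hteq
            rw [hJfix ℓ hl, hJfree ℓ' hl' ht] at hJe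
            simp only [unfixed, Finset.mem_filter, Finset.mem_univ, true_and] at hu
            exact hu ⟨ℓ, hl⟩ hJe
        · by_cases hl' : (ℓ' : ℕ) < k
          · obtain ⟨t, ht, hteq, _, _, _, _, hu, _⟩ := hwin ℓ (by omega)
            subst hteq
            rw [hJfix ℓ' hl', hJfree ℓ hl ht] at hJe
            simp only [unfixed, Finset.mem_filter, Finset.mem_univ, true_and] at hu
            exact hu ⟨ℓ', hl'⟩ hJe.symm
          · obtain ⟨t, ht, hteq, hform, _, _, _, _, hc⟩ := hwin ℓ (by omega)
            obtain ⟨t', ht', hteq', hform', _, _, _, _, hc'⟩ := hwin ℓ' (by omega)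
            have ht0 : tOf p π g k ((ℓ : ℕ) - k) < n := hteq ▸ ht
            have ht0' : tOf p π g k ((ℓ' : ℕ) - k) < n := hteq' ▸ ht'
            rw [hJfree ℓ hl ht0, hJfree ℓ' hl' ht0'] at hJe
            have htt : t = t' := by
              have h5 := congrArg Fin.val (π.injective hJe)
              simp only at h5
              omega
            subst htt
            rw [hqfree ℓ hl] at h2
            rw [hqfree ℓ' hl'] at h4
            have hrr : (ℓ : ℕ) - k ≠ (ℓ' : ℕ) - k := by
              intro hcon
              exact hne (Fin.ext (by omega))
            have hσeq : σ (π ⟨t, ht⟩) = σ (π ⟨t, ht'⟩) := rfl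
            rw [hform] at h1 h2
            rw [hform', ← hσeq] at h3 h4
            set o := (ℓ : ℕ) - k - cum p π g k t with ho
            set o' := (ℓ' : ℕ) - k - cum p π g k t with ho'
            have hoo : o ≠ o' := by omega
            rcases Nat.lt_or_ge o o' with hlt | hge
            · have hstep : o * g + g ≤ o' * g := by
                have := Nat.mul_le_mul_right g (Nat.succ_le_of_lt hlt)
                rw [Nat.succ_mul] at this
                omega
              omega
            · have hlt : o' < o := by omega
              have hstep : o' * g + g ≤ o * g := by
                have := Nat.mul_le_mul_right g (Nat.succ_le_of_lt hlt)
                rw [Nat.succ_mul] at this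
                omega
              omega
      · obtain ⟨ha, hb⟩ := hJwin ℓ i h1 h2
        obtain ⟨ha', hb'⟩ := hJwin ℓ' i h3 h4
        exact hdisj (J ℓ) (J ℓ') hJe i ⟨ha, hb, ha', hb'⟩
    -- processing intervals
    · intro ℓ i hi1 hi2
      obtain ⟨ha, hb⟩ := hJwin ℓ (i : ℕ) hi1 hi2
      exact hproc (J ℓ) i ha hb
    -- ordering
    · intro ℓ h1
      simp only [Equiv.refl_apply]
      have hl2 : ℓ < relaxLen p ρ g := by omega
      have hv0 : ((⟨ℓ, hl2⟩ : Fin (relaxLen p ρ g)) : ℕ) = ℓ := rfl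
      have hv1 : ((⟨ℓ + 1, h1⟩ : Fin (relaxLen p ρ g)) : ℕ) = ℓ + 1 := rfl
      by_cases hl1 : ℓ + 1 < k
      · have hl0 : ℓ < k := by omega
        rw [hσ'fix ⟨ℓ, hl2⟩ hl0, hqfix ⟨ℓ, hl2⟩ hl0, hσ'fix ⟨ℓ + 1, h1⟩ hl1]
        have hln : ℓ + 1 < n := by omega
        have h2 := hord ℓ hln
        rw [hπ ⟨ℓ, by omega⟩ hl0, hπ ⟨ℓ + 1, hln⟩ hl1] at h2
        exact h2
      · by_cases hl0 : ℓ < k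
        · -- ℓ + 1 = k
          obtain ⟨t, ht, _, _, hlb, _, hkt, _, _⟩ := hwin ⟨ℓ + 1, h1⟩ (by omega)
          rw [hσ'fix ⟨ℓ, hl2⟩ hl0, hqfix ⟨ℓ, hl2⟩ hl0]
          have hln : ℓ < n := by omega
          have hlt : ℓ < t := by omega
          have hch := hchain t ht ℓ hlt
          rw [hπ ⟨ℓ, hlt.trans ht⟩ hl0] at hch
          exact le_trans hch hlb
        · -- both free chunks
          obtain ⟨t, ht, hteq, hform, _, hub, _, _, hc⟩ := hwin ⟨ℓ, hl2⟩ (by omega)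
          obtain ⟨t', ht', hteq', hform', hlb', _, _, _, hc'⟩ := hwin ⟨ℓ + 1, h1⟩ (by omega)
          have htt : t ≤ t' := by
            rw [hteq, hteq']
            exact tOf_mono p π g k (by exact Nat.sub_le_sub_right (Nat.le_succ ℓ) k)
          rw [hqfree ⟨ℓ, hl2⟩ (by omega)]
          rcases htt.lt_or_eq with hlt | heq
          · have hch := hchain t' ht' t hlt
            have hpi : π ⟨t, hlt.trans ht'⟩ = π ⟨t, ht⟩ := rfl
            rw [hpi] at hch
            omega
          · subst heq
            have hσeq : σ (π ⟨t, ht⟩) = σ (π ⟨t, ht'⟩) := rfl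
            rw [hform, hform', ← hσeq]
            have hob : ((⟨ℓ + 1, h1⟩ : Fin (relaxLen p ρ g)) : ℕ) - k - cum p π g k t =
                (((⟨ℓ, hl2⟩ : Fin (relaxLen p ρ g)) : ℕ) - k - cum p π g k t) + 1 := by
              omega
            rw [hob, Nat.succ_mul]
            omega

end TOU
end

section
/- There exist an integer h ≥ 2, energy costs c : Fin h → ℚ, a finite type S of machine states with elements off and proc, a transition time function T : S → S → ℕ∞ with T s s = 1 for every s, a transition power function P : S → S → ℚ, a job list p : Fin n → ℕ with all p j ≥ 1, and an injective prefix ρ : Fin k → Fin n with range ρ ≠ Fin n, such that g := gcd {p j : j ∉ range ρ} satisfies g > 1 and TEC*(q_g, id) > TEC*(q_1, id), where q_g and q_1 are the g-relaxation and the unit relaxation of (p, ρ). -/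
namespace TOU

variable {S : Type*}

-- ===== auxiliary definitions and lemmas =====

/-- Constant transition time 1. -/
def T0 : Bool → Bool → ℕ∞ := fun _ _ => 1

/-- Power: 1 when both states are `proc = true`, else 0. -/
def P0 : Bool → Bool → ℚ := fun a b => if a && b then 1 else 0

/-- Costs on `Fin 8`: 1 at positions 3 and 4, else 0. -/
def c0 : Fin 8 → ℚ := fun i => if (i : ℕ) = 3 ∨ (i : ℕ) = 4 then 1 else 0

lemma c0_nonneg (i : Fin 8) : 0 ≤ c0 i := by unfold c0; split_ifs <;> norm_num

lemma P0_nonneg (a b : Bool) : 0 ≤ P0 a b := by unfold P0; split_ifs <;> norm_num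

open Classical in
lemma le_infQ {A : Set ℚ} {x : ℚ} (hx : ∀ y ∈ A, x ≤ y) : (x : WithTop ℚ) ≤ infQ A := by
  unfold infQ
  split_ifs with h
  · exact_mod_cast hx h.choose h.choose_spec.1
  · exact le_top

open Classical in
lemma infQ_le {A : Set ℚ} {x : ℚ} (hx : x ∈ A) (hmin : ∀ y ∈ A, x ≤ y) :
    infQ A ≤ (x : WithTop ℚ) := by
  unfold infQ
  have h : ∃ z ∈ A, ∀ y ∈ A, z ≤ y := ⟨x, hx, hmin⟩
  rw [dif_pos h]
  exact_mod_cast h.choose_spec.2 x hx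

/-- Structure of valid profiles when all transition times are 1. -/
lemma valid_struct {h : ℕ} {Ω : Fin h → Bool × Bool}
    (hv : ValidProfile false T0 Ω) :
    ∃ s : ℕ → Bool, s 0 = false ∧ s 1 = false ∧ s (h - 1) = false ∧ s h = false ∧
      2 ≤ h ∧ ∀ i : Fin h, Ω i = (s i, s ((i : ℕ) + 1)) := by
  obtain ⟨m, s, e, hm, h0, h1, hm1, hmm, he0, hem, hblk⟩ := hv
  have hek : ∀ k, k ≤ m → e k = k := by
    intro k
    induction k with
    | zero => intro _; exact he0
    | succ k ih =>
      intro hk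
      have hb := hblk (k + 1) (by omega) hk
      have h2 := hb.2.1
      simp only [T0, Nat.add_sub_cancel] at h2
      have h3 : e (k + 1) - e k = 1 := by exact_mod_cast h2.symm
      have h4 := hb.1
      simp only [Nat.add_sub_cancel] at h4
      have := ih (by omega)
      omega
  have hmh : m = h := by have := hek m le_rfl; omega
  subst hmh
  refine ⟨s, h0, h1, hm1, hmm, by omega, ?_⟩
  intro i
  have hi : (i : ℕ) < m := i.isLt
  have hb := hblk ((i : ℕ) + 1) (by omega) (by omega)
  have := hb.2.2 i (by rw [Nat.add_sub_cancel, hek _ (by omega)])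
    (by rw [hek _ (by omega)]; omega)
  simpa using this

/-- The state sequence of the explicit feasible unit solution. -/
def s0 : ℕ → Bool := fun i => i == 2 || i == 3 || i == 5 || i == 6

/-- The profile of the explicit feasible unit solution. -/
def Ω0 : Fin 8 → Bool × Bool := fun i => (s0 i, s0 ((i : ℕ) + 1))

lemma valid_Ω0 : ValidProfile false T0 Ω0 := by
  refine ⟨8, s0, id, by norm_num, rfl, rfl, rfl, rfl, rfl, rfl, ?_⟩
  intro k hk1 hk8
  simp only [id_eq]
  refine ⟨by omega, ?_, ?_⟩
  · show T0 _ _ = _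
    rw [show k - (k - 1) = 1 from by omega]
    rfl
  · intro i hi1 hi2
    have hik : (i : ℕ) = k - 1 := by omega
    show (s0 i, s0 ((i : ℕ) + 1)) = _
    rw [hik, show k - 1 + 1 = k from by omega]


/-- for some instance with non-coprime unfixed processing times the
gcd-relaxation bound is strictly stronger than the unit-relaxation bound. -/
theorem exists_gcd_relaxation_strictly_stronger :
    ∃ (h n k : ℕ) (S : Type) (_ : Fintype S) (off proc : S)
      (T : S → S → ℕ∞) (P : S → S → ℚ) (c : Fin h → ℚ)
      (p : Fin n → ℕ) (ρ : Fin k → Fin n),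
      2 ≤ h ∧ (∀ s : S, T s s = 1) ∧ (∀ j, 1 ≤ p j) ∧
      Function.Injective ρ ∧ Set.range ρ ≠ Set.univ ∧
      1 < gcdUnfixed p ρ ∧
      TECopt off proc T P c (relax p ρ (gcdUnfixed p ρ)) (Equiv.refl _) >
        TECopt off proc T P c (relax p ρ 1) (Equiv.refl _) := by
  refine ⟨8, 1, 0, Bool, inferInstance, false, true, T0, P0, c0,
    (fun _ => 2), (fun x => x.elim0), by norm_num, fun _ => rfl, fun _ => by norm_num,
    fun x => x.elim0, by rw [Set.range_eq_empty]; exact Set.empty_ne_univ, by decide, ?_⟩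
  show TECopt false true T0 P0 c0 (fun _ : Fin 1 => 2) (Equiv.refl _) >
      TECopt false true T0 P0 c0 (fun _ : Fin 2 => 1) (Equiv.refl _)
  have h1 : TECopt false true T0 P0 c0 (fun _ : Fin 2 => 1) (Equiv.refl _)
      ≤ ((0 : ℚ) : WithTop ℚ) := by
    unfold TECopt
    apply infQ_le
    · refine ⟨(fun j => 2 + 3 * (j : ℕ)), Ω0, ⟨valid_Ω0, ?_, ?_, ?_⟩, ?_, ?_⟩
      · intro j; fin_cases j <;> norm_num
      · intro j j' hne i hcon
        fin_cases j <;> fin_cases j' <;> simp_all <;> omega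
      · intro j i hi1 hi2
        fin_cases j <;>
        · simp only at hi1 hi2
          show (s0 i, s0 ((i : ℕ) + 1)) = _
          have : (i : ℕ) = 2 ∨ (i : ℕ) = 5 := by omega
          rcases this with h | h <;> rw [h] <;> rfl
      · intro ℓ h1
        have : ℓ = 0 := by omega
        subst this
        norm_num
      · show (0 : ℚ) = TEC P0 c0 Ω0
        symm
        apply Finset.sum_eq_zero
        intro i _
        fin_cases i <;> simp [c0, P0, Ω0, s0]
    · rintro y ⟨σ', Ω', _, _, rfl⟩
      apply Finset.sum_nonneg
      intro i _
      exact mul_nonneg (c0_nonneg i) (P0_nonneg _ _)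
  have h2 : ((1 : ℚ) : WithTop ℚ)
      ≤ TECopt false true T0 P0 c0 (fun _ : Fin 1 => 2) (Equiv.refl _) := by
    unfold TECopt
    apply le_infQ
    rintro y ⟨σ, Ω, ⟨hval, hwin, _, hproc⟩, _, rfl⟩
    obtain ⟨s, hs0, hs1, hs7, hs8, _, hΩ⟩ := valid_struct hval
    have hb : σ 0 + 2 ≤ 8 := hwin 0
    have hp1 : Ω ⟨σ 0, by omega⟩ = (true, true) :=
      hproc 0 ⟨σ 0, by omega⟩ (by simp) (by simp)
    have hp2 : Ω ⟨σ 0 + 1, by omega⟩ = (true, true) :=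
      hproc 0 ⟨σ 0 + 1, by omega⟩ (by simp) (by simp)
    rw [hΩ] at hp1 hp2
    simp only [Prod.mk.injEq] at hp1 hp2
    have hsa : s (σ 0) = true := hp1.1
    have hsa1 : s (σ 0 + 1) = true := hp1.2
    have hsa2 : s (σ 0 + 1 + 1) = true := hp2.2
    have ha2 : 2 ≤ σ 0 := by
      rcases Nat.lt_or_ge (σ 0) 2 with h | h
      · interval_cases (σ 0) <;> simp_all
      · exact h
    have ha4 : σ 0 ≤ 4 := by
      rcases Nat.lt_or_ge 4 (σ 0) with h | h
      · have h6 : σ 0 ≤ 6 := by omega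
        interval_cases (σ 0) <;> simp_all
      · exact h
    have hkey : ∃ i : Fin 8, ((i : ℕ) = 3 ∨ (i : ℕ) = 4) ∧ Ω i = (true, true) := by
      rcases Nat.lt_or_ge (σ 0) 4 with h | h
      · refine ⟨⟨3, by norm_num⟩, Or.inl rfl, ?_⟩
        rw [hΩ]
        interval_cases (σ 0) <;> simp_all
      · refine ⟨⟨4, by norm_num⟩, Or.inr rfl, ?_⟩
        rw [hΩ]
        have : σ 0 = 4 := by omega
        simp_all
    obtain ⟨i0, hi0, hΩ0⟩ := hkey
    have hterm : c0 i0 * P0 (Ω i0).1 (Ω i0).2 = 1 := by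
      rw [hΩ0]
      rcases hi0 with h | h <;> simp [c0, P0, h]
    have : (1 : ℚ) ≤ TEC P0 c0 Ω := by
      rw [← hterm]
      exact Finset.single_le_sum
        (fun i _ => mul_nonneg (c0_nonneg i) (P0_nonneg _ _)) (Finset.mem_univ i0)
    exact_mod_cast this
  exact lt_of_le_of_lt h1 (lt_of_lt_of_le (by exact_mod_cast (by norm_num : (0:ℚ) < 1)) h2)

end TOU
end

section
/- Let ρ : Fin k → Fin n be an injective prefix of fixed jobs and let d, d' be positive integers such that d divides d' and d' divides p j for every unfixed job j outside the range of ρ. Then TEC*(q_{d'}, id) ≥ TEC*(q_d, id), where q_{d'} and q_d are the d'-relaxation and the d-relaxation of (p, ρ). -/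
namespace TOU

variable {S : Type*}

open Classical in
lemma infQ_mono_s4 {A B : Set ℚ} (hA : A.Finite) (hBA : B ⊆ A) : infQ A ≤ infQ B := by
  classical
  unfold infQ
  split_ifs with h1 h2 h2
  · exact_mod_cast h1.choose_spec.2 _ (hBA h2.choose_spec.1)
  · exact le_top
  · obtain ⟨a, ha, hmin⟩ := Set.exists_min_image A id hA ⟨_, hBA h2.choose_spec.1⟩
    exact absurd ⟨a, ha, hmin⟩ h1
  · exact le_top

set_option maxHeartbeats 1000000 in
/-- relaxing with a divisor `d` of `d'` gives a weaker (smaller) bound. -/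
theorem relaxation_bound_monotone_in_divisor {S : Type*} [Fintype S] (off proc : S)
    (T : S → S → ℕ∞) (hT : ∀ s : S, T s s = 1)
    (P : S → S → ℚ) {h : ℕ} (hh : 2 ≤ h) (c : Fin h → ℚ)
    {n : ℕ} (p : Fin n → ℕ) (hp : ∀ j, 1 ≤ p j)
    {k : ℕ} (ρ : Fin k → Fin n) (hρ : Function.Injective ρ)
    (d d' : ℕ) (hd : 1 ≤ d) (hd' : 1 ≤ d') (hdd : d ∣ d')
    (hdvd : ∀ j ∈ unfixed ρ, d' ∣ p j) :
    TECopt off proc T P c (relax p ρ d') (Equiv.refl _) ≥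
      TECopt off proc T P c (relax p ρ d) (Equiv.refl _) := by
  classical
  obtain ⟨e, he⟩ := hdd
  have hepos : 0 < e := Nat.pos_of_ne_zero (by rintro rfl; simp at he; omega)
  subst he
  have hdpos : 0 < d := hd
  have hSdvd : d * e ∣ ∑ j ∈ unfixed ρ, p j := Finset.dvd_sum hdvd
  obtain ⟨M, hMM⟩ := hSdvd
  have hdivd : (∑ j ∈ unfixed ρ, p j) / d = M * e := by
    rw [hMM, mul_assoc, Nat.mul_div_cancel_left _ hdpos, mul_comm]
  have hdivd' : (∑ j ∈ unfixed ρ, p j) / (d * e) = M := by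
    rw [hMM, Nat.mul_div_cancel_left _ (by positivity)]
  have hK : relaxLen p ρ d = k + M * e := by unfold relaxLen; rw [hdivd]
  have hK' : relaxLen p ρ (d * e) = k + M := by unfold relaxLen; rw [hdivd']
  unfold TECopt
  apply infQ_mono_s4
  · apply Set.Finite.subset (Set.finite_range (TEC P c))
    rintro x ⟨σ, Ω, -, -, rfl⟩
    exact ⟨Ω, rfl⟩
  · rintro x ⟨σ', Ω, ⟨hvalid, hbound, hdisj, hproc⟩, hord, rfl⟩
    obtain ⟨σ'', hσ''eq⟩ : ∃ f : ℕ → ℕ,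
        ∀ (m : ℕ) (hm : m < relaxLen p ρ (d * e)), f m = σ' ⟨m, hm⟩ :=
      ⟨fun m => if hm : m < relaxLen p ρ (d * e) then σ' ⟨m, hm⟩ else 0,
        fun m hm => dif_pos hm⟩
    obtain ⟨σ, hσlt, hσge⟩ : ∃ σ : Fin (relaxLen p ρ d) → ℕ,
        (∀ (ℓ : Fin (relaxLen p ρ d)), (ℓ : ℕ) < k → σ ℓ = σ'' (ℓ : ℕ)) ∧
        (∀ (ℓ : Fin (relaxLen p ρ d)), ¬ (ℓ : ℕ) < k →
          σ ℓ = σ'' (k + ((ℓ : ℕ) - k) / e) + ((ℓ : ℕ) - k) % e * d) :=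
      ⟨fun ℓ => if hl : (ℓ : ℕ) < k then σ'' (ℓ : ℕ)
        else σ'' (k + ((ℓ : ℕ) - k) / e) + ((ℓ : ℕ) - k) % e * d,
        fun ℓ hl => dif_pos hl, fun ℓ hl => dif_neg hl⟩
    have hrd : ∀ (ℓ : Fin (relaxLen p ρ d)) (hl : ¬ (ℓ : ℕ) < k), relax p ρ d ℓ = d := by
      intro ℓ hl; simp only [relax, dif_neg hl]
    have hrd' : ∀ (m : Fin (relaxLen p ρ (d * e))) (hm : ¬ (m : ℕ) < k),
        relax p ρ (d * e) m = d * e := by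
      intro m hm; simp only [relax, dif_neg hm]
    have hrdlt : ∀ (ℓ : Fin (relaxLen p ρ d)) (hl : (ℓ : ℕ) < k),
        relax p ρ d ℓ = p (ρ ⟨ℓ, hl⟩) := by
      intro ℓ hl; simp only [relax, dif_pos hl]
    have hrdlt' : ∀ (m : Fin (relaxLen p ρ (d * e))) (hm : (m : ℕ) < k),
        relax p ρ (d * e) m = p (ρ ⟨m, hm⟩) := by
      intro m hm; simp only [relax, dif_pos hm]
    -- the parent job and window containment
    have hwin : ∀ ℓ : Fin (relaxLen p ρ d), ∃ (m : ℕ) (hm : m < relaxLen p ρ (d * e)),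
        ((ℓ : ℕ) < k → m = (ℓ : ℕ)) ∧ (¬ (ℓ : ℕ) < k → m = k + ((ℓ : ℕ) - k) / e) ∧
        σ' ⟨m, hm⟩ ≤ σ ℓ ∧
        σ ℓ + relax p ρ d ℓ ≤ σ' ⟨m, hm⟩ + relax p ρ (d * e) ⟨m, hm⟩ := by
      intro ℓ
      by_cases hl : (ℓ : ℕ) < k
      · have hm : (ℓ : ℕ) < relaxLen p ρ (d * e) := by omega
        refine ⟨(ℓ : ℕ), hm, fun _ => rfl, fun h => absurd hl h, ?_, ?_⟩
        · rw [hσlt ℓ hl, hσ''eq _ hm]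
        · rw [hσlt ℓ hl, hσ''eq _ hm, hrdlt ℓ hl, hrdlt' ⟨(ℓ : ℕ), hm⟩ hl]
      · have hℓK : (ℓ : ℕ) < k + M * e := by have := ℓ.isLt; omega
        have hqlt : ((ℓ : ℕ) - k) / e < M := (Nat.div_lt_iff_lt_mul hepos).mpr (by omega)
        have hm : k + ((ℓ : ℕ) - k) / e < relaxLen p ρ (d * e) := by omega
        refine ⟨k + ((ℓ : ℕ) - k) / e, hm, fun h => absurd h hl, fun _ => rfl, ?_, ?_⟩
        · rw [hσge ℓ hl, hσ''eq _ hm]; omega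
        · rw [hσge ℓ hl, hσ''eq _ hm, hrd ℓ hl, hrd' ⟨_, hm⟩ (by simp)]
          have hrlt : ((ℓ : ℕ) - k) % e < e := Nat.mod_lt _ hepos
          have hmul : ((ℓ : ℕ) - k) % e * d + d ≤ d * e := by
            calc ((ℓ : ℕ) - k) % e * d + d = (((ℓ : ℕ) - k) % e + 1) * d := by ring
              _ ≤ e * d := Nat.mul_le_mul_right d (by omega)
              _ = d * e := mul_comm e d
          calc σ' ⟨_, hm⟩ + ((ℓ : ℕ) - k) % e * d + d
              = σ' ⟨_, hm⟩ + (((ℓ : ℕ) - k) % e * d + d) := by ring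
            _ ≤ σ' ⟨_, hm⟩ + d * e := Nat.add_le_add_left hmul _
    refine ⟨σ, Ω, ⟨hvalid, ?_, ?_, ?_⟩, ?_, rfl⟩
    · -- windows within the horizon
      intro ℓ
      obtain ⟨m, hm, -, -, -, h2⟩ := hwin ℓ
      exact le_trans h2 (hbound ⟨m, hm⟩)
    · -- disjointness
      intro ℓ ℓ' hne i hi
      obtain ⟨h1, h2, h3, h4⟩ := hi
      obtain ⟨m, hm, hmlt, hmge, hc1, hc2⟩ := hwin ℓ
      obtain ⟨m', hm', hmlt', hmge', hc1', hc2'⟩ := hwin ℓ'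
      by_cases hmm : m = m'
      · -- same parent: both are split jobs of the same parent with distinct offsets
        by_cases hl : (ℓ : ℕ) < k
        · by_cases hl' : (ℓ' : ℕ) < k
          · exact hne (Fin.ext (by rw [← hmlt hl, ← hmlt' hl', hmm]))
          · have e1 := hmlt hl
            have e2 : k ≤ m' := by rw [hmge' hl']; exact Nat.le_add_right _ _
            omega
        · by_cases hl' : (ℓ' : ℕ) < k
          · have e1 : k ≤ m := by rw [hmge hl]; exact Nat.le_add_right _ _
            have e2 := hmlt' hl'
            omega
          · -- both split jobs
            have e1 := hmge hl; have e2 := hmge' hl'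
            have hq : ((ℓ : ℕ) - k) / e = ((ℓ' : ℕ) - k) / e := by
              rw [e1, e2] at hmm
              exact Nat.add_left_cancel hmm
            have hr : ((ℓ : ℕ) - k) % e ≠ ((ℓ' : ℕ) - k) % e := by
              intro hre
              have d1 := Nat.div_add_mod ((ℓ : ℕ) - k) e
              have d2 := Nat.div_add_mod ((ℓ' : ℕ) - k) e
              have hsub : (ℓ : ℕ) - k = (ℓ' : ℕ) - k := by
                rw [← d1, ← d2, hq, hre]
              exact hne (Fin.ext (by clear d1 d2; omega))
            rw [hσge ℓ hl] at h1 h2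
            rw [hσge ℓ' hl'] at h3 h4
            rw [hrd ℓ hl] at h2
            rw [hrd ℓ' hl'] at h4
            rw [hq] at h1 h2
            generalize hB : σ'' (k + ((ℓ' : ℕ) - k) / e) = B at h1 h2 h3 h4
            generalize hr1 : ((ℓ : ℕ) - k) % e = r1 at h1 h2 hr
            generalize hr2 : ((ℓ' : ℕ) - k) % e = r2 at h3 h4 hr
            rcases Nat.lt_or_ge r1 r2 with hlt | hge
            · have h5 : r1 * d + d ≤ r2 * d := by
                calc r1 * d + d = (r1 + 1) * d := by ring
                  _ ≤ r2 * d := Nat.mul_le_mul_right d (by omega)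
              exact absurd (calc i < B + r1 * d + d := h2
                  _ = B + (r1 * d + d) := by ring
                  _ ≤ B + r2 * d := Nat.add_le_add_left h5 _
                  _ ≤ i := h3) (lt_irrefl i)
            · have hgt : r2 < r1 := lt_of_le_of_ne hge (Ne.symm hr)
              have h5 : r2 * d + d ≤ r1 * d := by
                calc r2 * d + d = (r2 + 1) * d := by ring
                  _ ≤ r1 * d := Nat.mul_le_mul_right d (by omega)
              exact absurd (calc i < B + r2 * d + d := h4
                  _ = B + (r2 * d + d) := by ring
                  _ ≤ B + r1 * d := Nat.add_le_add_left h5 _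
                  _ ≤ i := h1) (lt_irrefl i)
      · -- different parents: windows lie in disjoint parent windows
        refine hdisj ⟨m, hm⟩ ⟨m', hm'⟩ (by simp [Fin.ext_iff, hmm]) i ⟨?_, ?_, ?_, ?_⟩
        · omega
        · omega
        · omega
        · omega
    · -- processing intervals
      intro ℓ i hi1 hi2
      obtain ⟨m, hm, -, -, hc1, hc2⟩ := hwin ℓ
      exact hproc ⟨m, hm⟩ i (by omega) (by omega)
    · -- ordered by the identity permutation
      intro ℓ h1
      simp only [Equiv.refl_apply]
      have h1' : ℓ + 1 < k + M * e := by rw [← hK]; exact h1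
      have hordc : ∀ (a : ℕ) (ha : a + 1 < relaxLen p ρ (d * e)),
          σ' ⟨a, by omega⟩ + relax p ρ (d * e) ⟨a, by omega⟩ ≤ σ' ⟨a + 1, ha⟩ := by
        intro a ha
        have := hord a ha
        simpa using this
      by_cases hcase1 : ℓ + 1 < k
      · -- both fixed
        have hlk : ℓ < k := by omega
        have hl1K' : ℓ + 1 < relaxLen p ρ (d * e) := by omega
        have e1 := hσlt ⟨ℓ, Nat.lt_of_succ_lt h1⟩ hlk
        have e2 := hσlt ⟨ℓ + 1, h1⟩ hcase1
        have e3 := hrdlt ⟨ℓ, Nat.lt_of_succ_lt h1⟩ hlk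
        rw [e1, e2, e3, hσ''eq ℓ (Nat.lt_of_succ_lt hl1K'), hσ''eq (ℓ + 1) hl1K']
        have := hordc ℓ hl1K'
        rw [hrdlt' ⟨ℓ, Nat.lt_of_succ_lt hl1K'⟩ hlk] at this
        exact this
      · by_cases hcase2 : ℓ + 1 = k
        · -- last fixed job followed by the first split job
          have hlk : ℓ < k := by omega
          have hMpos : 0 < M := by
            by_contra h0
            have hM0 : M = 0 := by omega
            rw [hM0, Nat.zero_mul, Nat.add_zero] at hK
            omega
          have hl1K' : ℓ + 1 < relaxLen p ρ (d * e) := by omega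
          have hlK' : ℓ < relaxLen p ρ (d * e) := by omega
          have e1 : σ ⟨ℓ, Nat.lt_of_succ_lt h1⟩ = σ' ⟨ℓ, hlK'⟩ := by
            rw [hσlt ⟨ℓ, Nat.lt_of_succ_lt h1⟩ hlk, hσ''eq ℓ hlK']
          have e3 := hrdlt ⟨ℓ, Nat.lt_of_succ_lt h1⟩ hlk
          have e2 : σ ⟨ℓ + 1, h1⟩ = σ' ⟨ℓ + 1, hl1K'⟩ := by
            have e2' := hσge ⟨ℓ + 1, h1⟩ (by simp [hcase2])
            simp only [Fin.val_mk, show ℓ + 1 - k = 0 by omega, Nat.zero_div,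
              Nat.zero_mod, Nat.add_zero, Nat.zero_mul] at e2'
            rw [e2', hσ''eq k (by omega)]
            exact congrArg σ' (Fin.ext (by simp [hcase2]))
          rw [e1, e2, e3]
          have hstep := hordc ℓ hl1K'
          rw [hrdlt' ⟨ℓ, hlK'⟩ hlk] at hstep
          exact hstep
        · -- two split jobs
          have hlge : ¬ ℓ < k := by omega
          obtain ⟨t, ht⟩ : ∃ t, ℓ - k = t := ⟨_, rfl⟩
          have hts : ℓ + 1 - k = t + 1 := by omega
          have e1 := hσge ⟨ℓ, Nat.lt_of_succ_lt h1⟩ hlge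
          have e2 := hσge ⟨ℓ + 1, h1⟩ (by simp; omega)
          have e3 := hrd ⟨ℓ, Nat.lt_of_succ_lt h1⟩ hlge
          simp only [Fin.val_mk, ht, hts] at e1 e2 e3
          have hdm : t / e * e + t % e = t := Nat.div_add_mod' t e
          by_cases hrtop : t % e + 1 < e
          · -- the next split job has the same parent
            have hdiv : (t + 1) / e = t / e := by
              have h' : t + 1 = t % e + 1 + t / e * e := by omega
              rw [h', Nat.add_mul_div_right _ _ hepos, Nat.div_eq_of_lt (by omega)]
              omega
            have hmod : (t + 1) % e = t % e + 1 := by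
              have h' : t + 1 = t % e + 1 + t / e * e := by omega
              rw [h', Nat.add_mul_mod_self_right, Nat.mod_eq_of_lt (by omega)]
            simp only [hdiv, hmod] at e2
            rw [e1, e2, e3]
            exact le_of_eq (by ring)
          · -- the next split job starts the next parent
            have hrmax : t % e = e - 1 := by
              have := Nat.mod_lt t hepos
              omega
            have ht1 : t + 1 = (t / e + 1) * e := by
              rw [add_mul, one_mul]
              omega
            have hdiv : (t + 1) / e = t / e + 1 := by
              rw [ht1, Nat.mul_div_cancel _ hepos]
            have hmod : (t + 1) % e = 0 := by
              rw [ht1, Nat.mul_mod_left]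
            simp only [hdiv, hmod, Nat.zero_mul, Nat.add_zero] at e2
            have hℓK := h1
            rw [hK] at hℓK
            have hqlt : t / e + 1 < M := by
              have h2' : t + 1 < M * e := by omega
              have h3' := (Nat.div_lt_iff_lt_mul hepos).mpr h2'
              rw [hdiv] at h3'
              omega
            have hmK' : k + t / e + 1 < relaxLen p ρ (d * e) := by omega
            have hAK' : k + t / e < relaxLen p ρ (d * e) := by omega
            rw [e1, e2, e3, hσ''eq (k + t / e) hAK', hσ''eq (k + (t / e + 1)) (by omega)]
            have hstep := hordc (k + t / e) hmK'
            rw [hrd' ⟨k + t / e, hAK'⟩ (by simp)] at hstep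
            have hre : t % e * d + d ≤ d * e := by
              calc t % e * d + d = (t % e + 1) * d := by ring
                _ ≤ e * d := Nat.mul_le_mul_right d (by omega)
                _ = d * e := mul_comm e d
            calc σ' ⟨k + t / e, hAK'⟩ + t % e * d + d
                = σ' ⟨k + t / e, hAK'⟩ + (t % e * d + d) := by ring
              _ ≤ σ' ⟨k + t / e, hAK'⟩ + d * e := Nat.add_le_add_left hre _
              _ ≤ σ' ⟨k + t / e + 1, hmK'⟩ := hstep
              _ = σ' ⟨k + (t / e + 1), by omega⟩ := congrArg σ' (Fin.ext (by simp; omega))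

end TOU
end

section
/- Let π be a permutation of Fin n and let ℓ_1 ≠ ℓ_2 be positions with p(π ℓ_1) = p(π ℓ_2). Let π' = π ∘ (swap ℓ_1 ℓ_2). Then TEC*(p, π') = TEC*(p, π); that is, exchanging two jobs with equal processing times in the sequence does not change the optimal total energy cost for the fixed sequence. -/
namespace TOU

variable {S : Type*}

lemma swap_sol_subset {S : Type*} (off proc : S)
    (T : S → S → ℕ∞) (P : S → S → ℚ) {h : ℕ} (c : Fin h → ℚ)
    {n : ℕ} (p : Fin n → ℕ)
    (π : Equiv.Perm (Fin n)) (ℓ₁ ℓ₂ : Fin n)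
    (heq : p (π ℓ₁) = p (π ℓ₂)) :
    {x : ℚ | ∃ (σ : Fin n → ℕ) (Ω : Fin h → S × S),
      Feasible off proc T p σ Ω ∧ Orders p σ π ∧ x = TEC P c Ω}
    ⊆ {x : ℚ | ∃ (σ : Fin n → ℕ) (Ω : Fin h → S × S),
      Feasible off proc T p σ Ω ∧ Orders p σ (π * Equiv.swap ℓ₁ ℓ₂) ∧ x = TEC P c Ω} := by
  rintro x ⟨σ, Ω, ⟨hval, hwin, hdisj, hproc⟩, hord, rfl⟩
  have hpπ : ∀ ℓ, p (π (Equiv.swap ℓ₁ ℓ₂ ℓ)) = p (π ℓ) := by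
    intro ℓ
    rcases eq_or_ne ℓ ℓ₁ with rfl | h1
    · simp [Equiv.swap_apply_left, heq]
    rcases eq_or_ne ℓ ℓ₂ with rfl | h2
    · simp [Equiv.swap_apply_right, heq]
    · rw [Equiv.swap_apply_of_ne_of_ne h1 h2]
  set g : Equiv.Perm (Fin n) := π * Equiv.swap ℓ₁ ℓ₂ * π⁻¹ with hg
  have hpg : ∀ j, p (g j) = p j := by
    intro j
    have := hpπ (π⁻¹ j)
    simpa [hg, Equiv.Perm.mul_apply] using this
  refine ⟨fun j => σ (g j), Ω, ⟨hval, ?_, ?_, ?_⟩, ?_, rfl⟩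
  · intro j; rw [← hpg j]; exact hwin (g j)
  · intro j j' hjj i
    rw [← hpg j, ← hpg j']
    exact hdisj (g j) (g j') (fun hc => hjj (g.injective hc)) i
  · intro j i hi1 hi2
    rw [← hpg j] at hi2
    exact hproc (g j) i hi1 hi2
  · intro ℓ h1
    have e1 : ∀ m : Fin n, g ((π * Equiv.swap ℓ₁ ℓ₂) m) = π m := by
      intro m; simp [hg, Equiv.Perm.mul_apply]
    have e2 : ∀ m : Fin n, p ((π * Equiv.swap ℓ₁ ℓ₂) m) = p (π m) := by
      intro m; simpa [Equiv.Perm.mul_apply] using hpπ m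
    simp only [e1, e2]
    exact hord ℓ h1

/-- exchanging two jobs with equal processing times in the sequence
does not change the optimal total energy cost for the fixed sequence. -/
theorem swap_equal_jobs_eq {S : Type*} [Fintype S] (off proc : S)
    (T : S → S → ℕ∞) (hT : ∀ s : S, T s s = 1)
    (P : S → S → ℚ) {h : ℕ} (hh : 2 ≤ h) (c : Fin h → ℚ)
    {n : ℕ} (p : Fin n → ℕ) (hp : ∀ j, 1 ≤ p j)
    (π : Equiv.Perm (Fin n)) (ℓ₁ ℓ₂ : Fin n) (hne : ℓ₁ ≠ ℓ₂)
    (heq : p (π ℓ₁) = p (π ℓ₂)) :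
    TECopt off proc T P c p (π * Equiv.swap ℓ₁ ℓ₂) = TECopt off proc T P c p π := by
  have heq' : p ((π * Equiv.swap ℓ₁ ℓ₂) ℓ₁) = p ((π * Equiv.swap ℓ₁ ℓ₂) ℓ₂) := by
    simp [Equiv.Perm.mul_apply, Equiv.swap_apply_left, Equiv.swap_apply_right, heq]
  have h3 : (π * Equiv.swap ℓ₁ ℓ₂) * Equiv.swap ℓ₁ ℓ₂ = π := by
    rw [mul_assoc, Equiv.swap_mul_self, mul_one]
  have hsub1 := swap_sol_subset off proc T P c p π ℓ₁ ℓ₂ heq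
  have hsub2 := swap_sol_subset off proc T P c p (π * Equiv.swap ℓ₁ ℓ₂) ℓ₁ ℓ₂ heq'
  rw [h3] at hsub2
  unfold TECopt
  congr 1
  exact Set.Subset.antisymm hsub2 hsub1

end TOU
end

section
/- Let π and π' be permutations of Fin n with π ℓ = π' ℓ for all ℓ < k, and suppose all jobs outside the set {π 0, …, π (k−1)} have equal processing time. Then TEC*(p, π) = TEC*(p, π'); in particular, any sequence extending the common prefix attains the minimum of TEC*(p, ·) over all permutations extending that prefix. -/
namespace TOU

variable {S : Type*}

/-- if all jobs outside the common length-`k` prefix have equal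
processing time, then any two sequences extending the prefix have equal optimum. -/
theorem extensions_of_prefix_eq {S : Type*} [Fintype S] (off proc : S)
    (T : S → S → ℕ∞) (hT : ∀ s : S, T s s = 1)
    (P : S → S → ℚ) {h : ℕ} (hh : 2 ≤ h) (c : Fin h → ℚ)
    {n : ℕ} (p : Fin n → ℕ) (hp : ∀ j, 1 ≤ p j)
    {k : ℕ} (π π' : Equiv.Perm (Fin n))
    (hpre : ∀ (ℓ : Fin n), (ℓ : ℕ) < k → π ℓ = π' ℓ)
    (hsame : ∀ j j' : Fin n,
      (∀ (ℓ : Fin n), (ℓ : ℕ) < k → π ℓ ≠ j) →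
      (∀ (ℓ : Fin n), (ℓ : ℕ) < k → π ℓ ≠ j') → p j = p j') :
    TECopt off proc T P c p π = TECopt off proc T P c p π' := by
  have key : ∀ (τ τ' : Equiv.Perm (Fin n)),
      (∀ (ℓ : Fin n), (ℓ : ℕ) < k → τ ℓ = τ' ℓ) →
      (∀ j j' : Fin n,
        (∀ (ℓ : Fin n), (ℓ : ℕ) < k → τ ℓ ≠ j) →
        (∀ (ℓ : Fin n), (ℓ : ℕ) < k → τ ℓ ≠ j') → p j = p j') →
      ∀ x : ℚ,
      (∃ (σ : Fin n → ℕ) (Ω : Fin h → S × S),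
        Feasible off proc T p σ Ω ∧ Orders p σ τ ∧ x = TEC P c Ω) →
      (∃ (σ : Fin n → ℕ) (Ω : Fin h → S × S),
        Feasible off proc T p σ Ω ∧ Orders p σ τ' ∧ x = TEC P c Ω) := by
    intro τ τ' hpre hsame x ⟨σ, Ω, hfeas, hord, hx⟩
    set f : Equiv.Perm (Fin n) := τ'.symm.trans τ with hf
    have hfapp : ∀ j, f j = τ (τ'.symm j) := fun j => rfl
    have hpeq : ∀ j, p (f j) = p j := by
      intro j
      by_cases hℓ : ((τ'.symm j : Fin n) : ℕ) < k
      · have : f j = j := by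
          rw [hfapp, hpre _ hℓ]; simp
        rw [this]
      · apply hsame
        · intro ℓ' hℓ' hc
          rw [hfapp] at hc
          have : ℓ' = τ'.symm j := τ.injective hc
          exact hℓ (this ▸ hℓ')
        · intro ℓ' hℓ' hc
          rw [hpre _ hℓ'] at hc
          have : ℓ' = τ'.symm j := τ'.injective (by simpa using hc)
          exact hℓ (this ▸ hℓ')
    refine ⟨fun j => σ (f j), Ω, ?_, ?_, hx⟩
    · obtain ⟨hvalid, hbound, hdisj, hproc⟩ := hfeas
      refine ⟨hvalid, ?_, ?_, ?_⟩
      · intro j; rw [← hpeq j]; exact hbound (f j)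
      · intro j j' hne i
        rw [← hpeq j, ← hpeq j']
        exact hdisj (f j) (f j') (fun hc => hne (f.injective hc)) i
      · intro j i h1 h2
        rw [← hpeq j] at h2
        exact hproc (f j) i h1 h2
    · intro ℓ h1
      have e1 : f (τ' ⟨ℓ, by omega⟩) = τ ⟨ℓ, by omega⟩ := by rw [hfapp]; simp
      have e2 : f (τ' ⟨ℓ + 1, h1⟩) = τ ⟨ℓ + 1, h1⟩ := by rw [hfapp]; simp
      show σ (f (τ' ⟨ℓ, by omega⟩)) + p (τ' ⟨ℓ, by omega⟩) ≤ σ (f (τ' ⟨ℓ + 1, h1⟩))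
      rw [← hpeq (τ' ⟨ℓ, by omega⟩), e1, e2]
      exact hord ℓ h1
  have hsame' : ∀ j j' : Fin n,
      (∀ (ℓ : Fin n), (ℓ : ℕ) < k → π' ℓ ≠ j) →
      (∀ (ℓ : Fin n), (ℓ : ℕ) < k → π' ℓ ≠ j') → p j = p j' := by
    intro j j' h1 h2
    exact hsame j j' (fun ℓ hℓ => hpre ℓ hℓ ▸ h1 ℓ hℓ)
      (fun ℓ hℓ => hpre ℓ hℓ ▸ h2 ℓ hℓ)
  have hpre' : ∀ (ℓ : Fin n), (ℓ : ℕ) < k → π' ℓ = π ℓ :=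
    fun ℓ hℓ => (hpre ℓ hℓ).symm
  unfold TECopt
  congr 1
  ext x
  exact ⟨key π π' hpre hsame x, key π' π hpre' hsame' x⟩

end TOU
end

section
/- Let u : Fin (Σ_{j<n} p j) → ℕ be the constant job list whose entries all equal 1. Then every feasible solution (σ, Ω) of p satisfies TEC(σ, Ω) ≥ TEC*(u, id); that is, the optimal total energy cost of the instance with all jobs split into unit jobs is a lower bound on the total energy cost of every feasible solution. -/
namespace TOU

variable {S : Type*}

lemma infQ_le_of_mem {A : Set ℚ} (hfin : A.Finite) {x : ℚ} (hx : x ∈ A) :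
    infQ A ≤ (x : WithTop ℚ) := by
  have hmin : ∃ m ∈ A, ∀ y ∈ A, m ≤ y :=
    Set.exists_min_image A id hfin ⟨x, hx⟩
  rw [infQ, dif_pos hmin]
  exact WithTop.coe_le_coe.mpr (hmin.choose_spec.2 x hx)

/-- the optimum of the all-unit-jobs instance is a lower bound on the
total energy cost of every feasible solution. -/
theorem unit_jobs_global_lower_bound {S : Type*} [Fintype S] (off proc : S)
    (T : S → S → ℕ∞) (hT : ∀ s : S, T s s = 1)
    (P : S → S → ℚ) {h : ℕ} (hh : 2 ≤ h) (c : Fin h → ℚ)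
    {n : ℕ} (p : Fin n → ℕ) (hp : ∀ j, 1 ≤ p j)
    (σ : Fin n → ℕ) (Ω : Fin h → S × S) (hfeas : Feasible off proc T p σ Ω) :
    ((TEC P c Ω : ℚ) : WithTop ℚ) ≥
      TECopt off proc T P c (fun _ : Fin (∑ j, p j) => 1) (Equiv.refl _) := by
  classical
  obtain ⟨hvalid, hbound, hdisj, hproc⟩ := hfeas
  set N := ∑ j, p j with hN
  set F : Finset ℕ := Finset.univ.biUnion (fun j => Finset.Ico (σ j) (σ j + p j)) with hF
  have hcard : F.card = N := by
    rw [hF, Finset.card_biUnion]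
    · simp [hN]
    · intro x _ y _ hxy
      simp only [Function.onFun]; rw [Finset.disjoint_left]
      intro i hi hi'
      rw [Finset.mem_Ico] at hi hi'
      exact hdisj x y hxy i ⟨hi.1, hi.2, hi'.1, hi'.2⟩
  set σ' : Fin N → ℕ := fun ℓ => F.orderEmbOfFin hcard ℓ with hσ'
  have hmem : ∀ ℓ, σ' ℓ ∈ F := fun ℓ => F.orderEmbOfFin_mem hcard ℓ
  have hwin : ∀ ℓ, ∃ j : Fin n, σ j ≤ σ' ℓ ∧ σ' ℓ < σ j + p j := by
    intro ℓ
    have := hmem ℓ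
    rw [hF, Finset.mem_biUnion] at this
    obtain ⟨j, _, hj⟩ := this
    rw [Finset.mem_Ico] at hj
    exact ⟨j, hj⟩
  have hmono : StrictMono σ' := fun a b hab =>
    (F.orderEmbOfFin hcard).strictMono hab
  have hfeas' : Feasible off proc T (fun _ : Fin N => 1) σ' Ω := by
    refine ⟨hvalid, ?_, ?_, ?_⟩
    · intro j
      obtain ⟨j', hj'⟩ := hwin j
      have := hbound j'
      show σ' j + 1 ≤ h
      omega
    · intro j j' hne i hcontra
      simp only [] at hcontra
      have : σ' j = σ' j' := by omega
      exact hne (hmono.injective this)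
    · intro j i h1 h2
      simp only [] at h2
      obtain ⟨j', hj'⟩ := hwin j
      have hieq : (i : ℕ) = σ' j := by omega
      exact hproc j' i (by omega) (by omega)
  have hmemA : TEC P c Ω ∈ {x : ℚ | ∃ (σ₀ : Fin N → ℕ) (Ω₀ : Fin h → S × S),
      Feasible off proc T (fun _ : Fin N => 1) σ₀ Ω₀ ∧
      Orders (fun _ : Fin N => 1) σ₀ (Equiv.refl _) ∧ x = TEC P c Ω₀} := by
    refine ⟨σ', Ω, hfeas', ?_, rfl⟩
    intro ℓ h1
    have : (⟨ℓ, by omega⟩ : Fin N) < ⟨ℓ + 1, h1⟩ := by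
      simp [Fin.lt_def]
    have := hmono this
    simpa using this
  have hfin : ({x : ℚ | ∃ (σ₀ : Fin N → ℕ) (Ω₀ : Fin h → S × S),
      Feasible off proc T (fun _ : Fin N => 1) σ₀ Ω₀ ∧
      Orders (fun _ : Fin N => 1) σ₀ (Equiv.refl _) ∧ x = TEC P c Ω₀}).Finite := by
    apply (Set.finite_range (fun Ω₀ : Fin h → S × S => TEC P c Ω₀)).subset
    rintro x ⟨σ₀, Ω₀, _, _, rfl⟩
    exact ⟨Ω₀, rfl⟩
  exact infQ_le_of_mem hfin hmemA

end TOU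
end

section
/- Let Ω : Fin h → S × S be a valid state profile and let B_1, …, B_K be the maximal blocks of consecutive intervals i with Ω i = (proc, proc). If there exists a partition of Fin n into sets A_1, …, A_K with Σ_{j ∈ A_k} p j ≤ |B_k| for every k, then there exists σ : Fin n → ℕ such that (σ, Ω) is a feasible solution of p; in particular this solution has TEC(σ, Ω) = Σ_{i<h} c i · P(Ω i). -/
namespace TOU

variable {S : Type*}

/-- if the jobs can be packed into the maximal processing blocks of a
valid profile `Ω`, then `Ω` extends to a feasible solution with cost `Σ c i • P (Ω i)`. -/
theorem packing_into_blocks_feasible {S : Type*} [Fintype S] (off proc : S)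
    (T : S → S → ℕ∞) (hT : ∀ s : S, T s s = 1)
    (P : S → S → ℚ) {h : ℕ} (hh : 2 ≤ h) (c : Fin h → ℚ)
    {n : ℕ} (p : Fin n → ℕ) (hp : ∀ j, 1 ≤ p j)
    (Ω : Fin h → S × S) (hΩ : ValidProfile off T Ω)
    {K : ℕ} (a b : Fin K → ℕ) (hblocks : IsMaxProcBlocks proc Ω a b)
    (A : Fin K → Finset (Fin n))
    (hpart : ∀ j : Fin n, ∃! k, j ∈ A k)
    (hfit : ∀ k, ∑ j ∈ A k, p j ≤ b k - a k) :
    ∃ σ : Fin n → ℕ, Feasible off proc T p σ Ω ∧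
      TEC P c Ω = ∑ i, c i * P (Ω i).1 (Ω i).2 := by
  obtain ⟨hab, hproc, -, hsep⟩ := hblocks
  choose kk hk using fun j => (hpart j).exists
  set σ : Fin n → ℕ := fun j =>
    a (kk j) + ∑ j' ∈ (A (kk j)).filter (· < j), p j' with hσ
  -- key bound for each job
  have key : ∀ j : Fin n, σ j + p j ≤ b (kk j) := by
    intro j
    have hsub : insert j ((A (kk j)).filter (· < j)) ⊆ A (kk j) := by
      intro x hx
      rcases Finset.mem_insert.mp hx with heq | hx
      · subst heq; exact hk _
      · exact (Finset.mem_filter.mp hx).1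
    have hnot : j ∉ (A (kk j)).filter (· < j) := by
      simp [Finset.mem_filter]
    have h1 : (∑ j' ∈ (A (kk j)).filter (· < j), p j') + p j ≤ ∑ j' ∈ A (kk j), p j' := by
      have := Finset.sum_le_sum_of_subset (f := p) hsub
      rw [Finset.sum_insert hnot] at this
      omega
    have h2 := hfit (kk j)
    have h3 := (hab (kk j)).1
    simp only [hσ]
    omega
  have hlow : ∀ j : Fin n, a (kk j) ≤ σ j := fun j => Nat.le_add_right _ _
  -- disjointness helper within same block
  have samek : ∀ j j' : Fin n, kk j = kk j' → j < j' → σ j + p j ≤ σ j' := by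
    intro j j' hkk hjj
    have hsub : insert j ((A (kk j)).filter (· < j)) ⊆ (A (kk j')).filter (· < j') := by
      intro x hx
      rcases Finset.mem_insert.mp hx with heq | hx
      · subst heq; exact Finset.mem_filter.mpr ⟨hkk ▸ hk x, hjj⟩
      · obtain ⟨hx1, hx2⟩ := Finset.mem_filter.mp hx
        exact Finset.mem_filter.mpr ⟨hkk ▸ hx1, hx2.trans hjj⟩
    have hnot : j ∉ (A (kk j)).filter (· < j) := by simp [Finset.mem_filter]
    have h1 := Finset.sum_le_sum_of_subset (f := p) hsub
    rw [Finset.sum_insert hnot, hkk] at h1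
    simp only [hσ, hkk]
    omega
  refine ⟨σ, ⟨hΩ, ?_, ?_, ?_⟩, rfl⟩
  · intro j
    have := key j
    have := (hab (kk j)).2
    omega
  · intro j j' hne i hcontra
    obtain ⟨h1, h2, h3, h4⟩ := hcontra
    rcases eq_or_ne (kk j) (kk j') with hkk | hkk
    · rcases lt_trichotomy j j' with hlt | heq | hlt
      · have := samek j j' hkk hlt; omega
      · exact hne heq
      · have := samek j' j hkk.symm hlt; omega
    · rcases lt_or_gt_of_ne hkk with hlt | hlt
      · have := hsep _ _ hlt
        have := key j
        have := hlow j'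
        omega
      · have := hsep _ _ hlt
        have := key j'
        have := hlow j
        omega
  · intro j i hi1 hi2
    have := key j
    have := hlow j
    exact hproc (kk j) i (by omega) (by omega)

end TOU
end
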